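/- For any points x_1,…,x_n ∈ X, the squared distance from Φ(x) to the linear span of {Φ(x_1),…,Φ(x_n)} satisfies ∫_X dist( Φ(x), span{Φ(x_1),…,Φ(x_n)} )² dρ(x) ≥ Σ_{l=n+1}^∞ λ_l. Equivalently, ∫_X sup{ |⟨f, Φ(x)⟩|² : f ∈ H, ‖f‖ ≤ 1, ⟨f, Φ(x_i)⟩ = 0 for all i } dρ(x) ≥ Σ_{l=n+1}^∞ λ_l. -/

import Mathlib

/-!
Put `u i = ∫ ψ i • Φ dρ`. The eigen-equations give `⟪Φ x, u i⟫ = λ i ψ i x`, so the `u i` are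
orthogonal with `‖u i‖² = λ i`. Let `V` be the span of the `Φ (x_j)` and `P`, `P⊥` the orthogonal
projections onto `V`, `Vᗮ`. Since `dist (Φ x) V = ‖P⊥ (Φ x)‖` and `∫ ψ i • P⊥ Φ = P⊥ (u i)`,
Bessel's inequality for the orthonormal `ψ i` in `L²(ρ; H)` gives
`∑_{i<N} (λ i - ‖P (u i)‖²) ≤ ∫ dist (Φ x) V²`. As `dim V ≤ n`, the weights `‖P (u i)‖² / λ i`
lie in `[0, 1]` and add up to at most `n`, so for decreasing `λ` we get
`∑_i ‖P (u i)‖² ≤ λ 0 + ⋯ + λ (n - 1)`. Letting `N → ∞` gives the tail bound.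
-/

open MeasureTheory Finset Module
open scoped RealInnerProductSpace

theorem sum_mul_le_sum_range_of_antitone {μ t : ℕ → ℝ} {n : ℕ} (hμ : Antitone μ)
    (hμn : 0 ≤ μ n) {s : Finset ℕ} (ht0 : ∀ i ∈ s, 0 ≤ t i) (ht1 : ∀ i ∈ s, t i ≤ 1)
    (hts : ∑ i ∈ s, t i ≤ n) :
    ∑ i ∈ s, μ i * t i ≤ ∑ i ∈ range n, μ i := by
  calc ∑ i ∈ s, μ i * t i
      ≤ ∑ i ∈ s, (μ n * t i + if i ∈ range n then μ i - μ n else 0) := by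
        refine sum_le_sum fun i hi => ?_
        split_ifs with hin
        · nlinarith [hμ (mem_range.1 hin).le, ht1 i hi]
        · nlinarith [hμ (not_lt.1 (mem_range.not.1 hin)), ht0 i hi]
    _ = μ n * ∑ i ∈ s, t i + ∑ i ∈ s ∩ range n, (μ i - μ n) := by
        rw [sum_add_distrib, mul_sum, sum_ite_mem]
    _ ≤ μ n * n + ∑ i ∈ range n, (μ i - μ n) := by
        gcongr ?_ + ?_
        · exact mul_le_mul_of_nonneg_left hts hμn
        · exact sum_le_sum_of_subset_of_nonneg inter_subset_right
            fun i hi _ => sub_nonneg.2 (hμ (mem_range.1 hi).le)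
    _ = ∑ i ∈ range n, μ i := by
        simp only [sum_sub_distrib, sum_const, card_range, nsmul_eq_mul]; ring

section Projection

variable {H : Type*} [NormedAddCommGroup H] [InnerProductSpace ℝ H]

theorem Submodule.infDist_eq_norm_starProjection_orthogonal (K : Submodule ℝ H)
    [K.HasOrthogonalProjection] (v : H) :
    Metric.infDist v K = ‖Kᗮ.starProjection v‖ := by
  rw [Metric.infDist_eq_iInf, starProjection_orthogonal']
  change _ = ‖v - K.starProjection v‖
  rw [starProjection_minimal]
  exact iInf_congr fun w => dist_eq_norm _ _

theorem Orthonormal.sum_norm_sq_starProjection_le {ι : Type*} {φ : ι → H}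
    (hφ : Orthonormal ℝ φ) (K : Submodule ℝ H) [FiniteDimensional ℝ K] (s : Finset ι) :
    ∑ i ∈ s, ‖K.starProjection (φ i)‖ ^ 2 ≤ finrank ℝ K := by
  set b := stdOrthonormalBasis ℝ K
  have hP : ∀ v, ‖K.starProjection v‖ ^ 2 = ∑ j, ⟪v, b j⟫ ^ 2 := fun v => by
    rw [K.starProjection_apply]
    change ‖K.orthogonalProjectionOnto v‖ ^ 2 = _
    rw [← b.sum_sq_inner_right]
    simp_rw [Submodule.inner_orthogonalProjectionOnto_eq_of_mem_left, real_inner_comm]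
  calc ∑ i ∈ s, ‖K.starProjection (φ i)‖ ^ 2 = ∑ j, ∑ i ∈ s, ⟪φ i, b j⟫ ^ 2 := by
        simp_rw [hP]; exact sum_comm
    _ ≤ ∑ _j, (1 : ℝ) := sum_le_sum fun j _ => by
        have hb : ‖(b j : H)‖ = 1 := b.orthonormal.1 j
        simpa [hb] using hφ.sum_inner_products_le (b j : H) (s := s)
    _ = finrank ℝ K := by simp

theorem sum_norm_sq_starProjection_le_of_orthogonal {u : ℕ → H}
    (hu : Pairwise fun i j => ⟪u i, u j⟫ = 0) (hanti : Antitone fun i => ‖u i‖ ^ 2)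
    (K : Submodule ℝ H) [FiniteDimensional ℝ K] {n : ℕ} (hK : finrank ℝ K ≤ n)
    (s : Finset ℕ) :
    ∑ i ∈ s, ‖K.starProjection (u i)‖ ^ 2 ≤ ∑ i ∈ range n, ‖u i‖ ^ 2 := by
  classical
  set t : ℕ → ℝ := fun i => ‖K.starProjection (u i)‖ ^ 2 / ‖u i‖ ^ 2 with ht
  have hφ : Orthonormal ℝ fun i : {i // u i ≠ 0} => ‖u i‖⁻¹ • u i :=
    ⟨fun i => norm_smul_inv_norm i.2, fun i j hij => by
      simp [real_inner_smul_left, real_inner_smul_right, hu (Subtype.coe_ne_coe.2 hij)]⟩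
  -- when `u i = 0`, both sides vanish since `t i = 0 / 0 = 0`
  have hPt : ∀ i, ‖K.starProjection (u i)‖ ^ 2 = ‖u i‖ ^ 2 * t i := fun i => by
    rcases eq_or_ne (u i) 0 with h | h
    · simp [h]
    · exact (mul_div_cancel₀ _ (by positivity)).symm
  have htφ : ∀ i, ‖K.starProjection (‖u i‖⁻¹ • u i)‖ ^ 2 = t i := fun i => by
    rw [map_smul, norm_smul, mul_pow, norm_inv, norm_norm, inv_pow, ht, inv_mul_eq_div]
  have hts : ∑ i ∈ s, t i ≤ n :=
    calc ∑ i ∈ s, t i = ∑ i ∈ s.subtype (u · ≠ 0), ‖K.starProjection (‖u i‖⁻¹ • u i)‖ ^ 2 := by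
          simp_rw [htφ]
          rw [sum_subtype_eq_sum_filter]
          exact (sum_filter_of_ne (p := (u · ≠ 0)) fun i _ h hu0 => h (by simp [ht, hu0])).symm
      _ ≤ finrank ℝ K := hφ.sum_norm_sq_starProjection_le K _
      _ ≤ n := by exact_mod_cast hK
  simp_rw [hPt]
  refine sum_mul_le_sum_range_of_antitone hanti (sq_nonneg _) (fun i _ => by positivity)
    (fun i _ => div_le_one_of_le₀ ?_ (sq_nonneg _)) hts
  gcongr
  exact K.norm_starProjection_apply_le (u i)

end Projection

section Kernel

variable {X : Type*} [TopologicalSpace X] [CompactSpace X] [MeasurableSpace X]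
  [OpensMeasurableSpace X] {ρ : Measure X} [IsFiniteMeasure ρ]
  {H : Type*} [NormedAddCommGroup H] [InnerProductSpace ℝ H] [CompleteSpace H]

theorem Continuous.integrable_of_compactSpace {E : Type*} [NormedAddCommGroup E] {f : X → E}
    (hf : Continuous f) : Integrable f ρ :=
  hf.integrable_of_hasCompactSupport (HasCompactSupport.of_compactSpace f)

theorem integral_mul_inner_eq_inner_integral_smul {ψ : X → ℝ} (hψ : Continuous ψ)
    {F : X → H} (hF : Continuous F) (v : H) :
    ∫ x, ψ x * ⟪v, F x⟫ ∂ρ = ⟪v, ∫ x, ψ x • F x ∂ρ⟫ := by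
  rw [← integral_inner (f := fun x => ψ x • F x) (hψ.smul hF).integrable_of_compactSpace]
  simp_rw [real_inner_smul_right]

theorem integral_norm_sq_sub_sum_smul_integral {ι : Type*} [DecidableEq ι] {ψ : ι → X → ℝ}
    (hψ : ∀ i, Continuous (ψ i)) (horth : ∀ i j, ∫ x, ψ i x * ψ j x ∂ρ = if i = j then 1 else 0)
    {F : X → H} (hF : Continuous F) (s : Finset ι) :
    ∫ x, ‖F x - ∑ i ∈ s, ψ i x • ∫ y, ψ i y • F y ∂ρ‖ ^ 2 ∂ρ
      = ∫ x, ‖F x‖ ^ 2 ∂ρ - ∑ i ∈ s, ‖∫ x, ψ i x • F x ∂ρ‖ ^ 2 := by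
  set a : ι → H := fun i => ∫ x, ψ i x • F x ∂ρ
  change ∫ x, ‖F x - ∑ i ∈ s, ψ i x • a i‖ ^ 2 ∂ρ = ∫ x, ‖F x‖ ^ 2 ∂ρ - ∑ i ∈ s, ‖a i‖ ^ 2
  have hint : ∀ f : X → ℝ, Continuous f → Integrable f ρ := fun f hf =>
    hf.integrable_of_compactSpace
  have hcross : ∀ i, ∫ x, ψ i x * ⟪F x, a i⟫ ∂ρ = ‖a i‖ ^ 2 := fun i => by
    simp_rw [real_inner_comm (a i)]
    exact (integral_mul_inner_eq_inner_integral_smul (hψ i) hF (a i)).trans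
      (real_inner_self_eq_norm_sq _)
  have hgram : ∀ i j, ∫ x, ψ i x * (ψ j x * ⟪a j, a i⟫) ∂ρ = if i = j then ‖a i‖ ^ 2 else 0 := by
    intro i j
    simp_rw [← mul_assoc]
    rw [integral_mul_const, horth]
    split_ifs with h
    · rw [h, one_mul, real_inner_self_eq_norm_sq]
    · rw [zero_mul]
  have hexpand : ∀ x, ‖F x - ∑ i ∈ s, ψ i x • a i‖ ^ 2 = ‖F x‖ ^ 2
      - 2 * ∑ i ∈ s, ψ i x * ⟪F x, a i⟫ + ∑ i ∈ s, ∑ j ∈ s, ψ i x * (ψ j x * ⟪a j, a i⟫) := by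
    intro x
    rw [norm_sub_sq_real, ← real_inner_self_eq_norm_sq (∑ i ∈ s, ψ i x • a i)]
    simp only [inner_sum, sum_inner, real_inner_smul_left, real_inner_smul_right]
  simp_rw [hexpand]
  rw [integral_add (hint _ (by fun_prop)) (hint _ (by fun_prop)),
    integral_sub (hint _ (by fun_prop)) (hint _ (by fun_prop)), integral_const_mul,
    integral_finsetSum _ fun i _ => hint _ (by fun_prop),
    integral_finsetSum _ fun i _ => hint _ (by fun_prop),
    sum_congr rfl fun i _ => integral_finsetSum _ fun j _ => hint _ (by fun_prop)]
  simp only [hcross, hgram, sum_ite_eq, sum_ite_mem, inter_self]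
  ring

theorem sum_norm_sq_integral_smul_le {ι : Type*} [DecidableEq ι] {ψ : ι → X → ℝ}
    (hψ : ∀ i, Continuous (ψ i)) (horth : ∀ i j, ∫ x, ψ i x * ψ j x ∂ρ = if i = j then 1 else 0)
    {F : X → H} (hF : Continuous F) (s : Finset ι) :
    ∑ i ∈ s, ‖∫ x, ψ i x • F x ∂ρ‖ ^ 2 ≤ ∫ x, ‖F x‖ ^ 2 ∂ρ := by
  rw [← sub_nonneg, ← integral_norm_sq_sub_sum_smul_integral hψ horth hF s]
  exact integral_nonneg fun x => sq_nonneg _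

theorem sum_norm_sq_starProjection_integral_smul_le_integral_infDist_sq {ι : Type*}
    [DecidableEq ι] {ψ : ι → X → ℝ} (hψ : ∀ i, Continuous (ψ i))
    (horth : ∀ i j, ∫ x, ψ i x * ψ j x ∂ρ = if i = j then 1 else 0)
    {Φ : X → H} (hΦ : Continuous Φ) (K : Submodule ℝ H) [K.HasOrthogonalProjection]
    (s : Finset ι) :
    ∑ i ∈ s, ‖Kᗮ.starProjection (∫ x, ψ i x • Φ x ∂ρ)‖ ^ 2 ≤
      ∫ x, Metric.infDist (Φ x) K ^ 2 ∂ρ := by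
  simp_rw [K.infDist_eq_norm_starProjection_orthogonal]
  convert sum_norm_sq_integral_smul_le hψ horth
    (F := fun x => Kᗮ.starProjection (Φ x)) (by fun_prop) s using 4 with i
  simp_rw [← map_smul]
  exact (ContinuousLinearMap.integral_comp_comm _
    ((hψ i).smul hΦ).integrable_of_compactSpace).symm

theorem inner_integral_smul_eq_of_eigen {ι : Type*} [DecidableEq ι] {ψ : ι → X → ℝ}
    (hψ : ∀ i, Continuous (ψ i)) (horth : ∀ i j, ∫ x, ψ i x * ψ j x ∂ρ = if i = j then 1 else 0)
    {Φ : X → H} (hΦ : Continuous Φ) {lam : ι → ℝ}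
    (heig : ∀ i x, ∫ y, ⟪Φ x, Φ y⟫ * ψ i y ∂ρ = lam i * ψ i x) (i j : ι) :
    ⟪∫ y, ψ i y • Φ y ∂ρ, ∫ y, ψ j y • Φ y ∂ρ⟫ = if i = j then lam i else 0 := by
  have hΦu : ∀ x, ⟪Φ x, ∫ y, ψ i y • Φ y ∂ρ⟫ = lam i * ψ i x := fun x => by
    rw [← integral_mul_inner_eq_inner_integral_smul (hψ i) hΦ, ← heig i x]
    simp_rw [mul_comm]
  calc ⟪∫ y, ψ i y • Φ y ∂ρ, ∫ y, ψ j y • Φ y ∂ρ⟫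
      = ∫ y, lam i * (ψ i y * ψ j y) ∂ρ := by
        rw [← integral_mul_inner_eq_inner_integral_smul (hψ j) hΦ]
        congr 1 with y
        rw [real_inner_comm, hΦu]
        ring
    _ = if i = j then lam i else 0 := by
        rw [integral_const_mul, horth]
        split_ifs <;> simp

end Kernel

theorem integral_sq_dist_span_ge_tail_general
    {X : Type*} [MetricSpace X] [CompactSpace X] [MeasurableSpace X] [BorelSpace X]
    (ρ : Measure X) [IsProbabilityMeasure ρ]
    {H : Type*} [NormedAddCommGroup H] [InnerProductSpace ℝ H] [CompleteSpace H]
    (Φ : X → H) (hΦc : Continuous Φ)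
    (lam : ℕ → ℝ) (hlam_anti : Antitone lam)
    (ψ : ℕ → X → ℝ) (hψc : ∀ i, Continuous (ψ i))
    (horth : ∀ i j, ∫ x, ψ i x * ψ j x ∂ρ = if i = j then 1 else 0)
    (heig : ∀ i x, ∫ y, ⟪Φ x, Φ y⟫ * ψ i y ∂ρ = lam i * ψ i x)
    (n : ℕ) (pts : Fin n → X) :
    ∑' i : ℕ, lam (n + i) ≤
      ∫ x, Metric.infDist (Φ x)
          (Submodule.span ℝ (Set.range fun i => Φ (pts i)) : Set H) ^ 2 ∂ρ := by
  set V := Submodule.span ℝ (Set.range fun i => Φ (pts i))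
  have : FiniteDimensional ℝ V := FiniteDimensional.span_of_finite ℝ (Set.finite_range _)
  have hV : finrank ℝ V ≤ n := by
    simpa [Set.finrank] using finrank_range_le_card (R := ℝ) fun i => Φ (pts i)
  set u : ℕ → H := fun i => ∫ y, ψ i y • Φ y ∂ρ
  have hu := inner_integral_smul_eq_of_eigen hψc horth hΦc heig
  have hnorm : ∀ i, ‖u i‖ ^ 2 = lam i := fun i => by
    rw [← real_inner_self_eq_norm_sq, hu, if_pos rfl]
  have hproj : ∀ N, ∑ i ∈ range N, ‖V.starProjection (u i)‖ ^ 2 ≤ ∑ i ∈ range n, lam i :=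
    fun N => by
    simpa only [hnorm] using sum_norm_sq_starProjection_le_of_orthogonal (u := u)
      (fun i j h => by simp [u, hu, h]) (by simpa only [hnorm] using hlam_anti) V hV (range N)
  refine Real.tsum_le_of_sum_range_le (fun i => hnorm (n + i) ▸ sq_nonneg _) fun N => ?_
  have hsplit : ∑ i ∈ range (n + N), lam i = ∑ i ∈ range (n + N), ‖V.starProjection (u i)‖ ^ 2
      + ∑ i ∈ range (n + N), ‖Vᗮ.starProjection (u i)‖ ^ 2 := by
    rw [← sum_add_distrib]
    refine sum_congr rfl fun i _ => ?_
    rw [← hnorm, V.norm_sq_eq_add_norm_sq_starProjection]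
  linarith [sum_range_add lam n N, hproj (n + N),
    sum_norm_sq_starProjection_integral_smul_le_integral_infDist_sq hψc horth hΦc V (range (n + N))]

/-- For any points `x_1,…,x_n`, the average (w.r.t. `ρ`) squared distance from `Φ(x)` to
`span{Φ(x_1),…,Φ(x_n)}` is at least the tail sum `Σ_{l=n+1}^∞ λ_l` of the eigenvalues of
the kernel integral operator. -/
theorem integral_sq_dist_span_ge_tail
    {X : Type*} [MetricSpace X] [CompactSpace X] [MeasurableSpace X] [BorelSpace X]
    (ρ : Measure X) [IsProbabilityMeasure ρ]
    {H : Type*} [NormedAddCommGroup H] [InnerProductSpace ℝ H] [CompleteSpace H]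
    (Φ : X → H) (hΦc : Continuous Φ) (hΦ : ∀ x, ‖Φ x‖ ≤ 1)
    (lam : ℕ → ℝ) (hlam_anti : Antitone lam) (hlam_nonneg : ∀ i, 0 ≤ lam i)
    (ψ : ℕ → X → ℝ) (hψc : ∀ i, Continuous (ψ i))
    (horth : ∀ i j, ∫ x, ψ i x * ψ j x ∂ρ = if i = j then 1 else 0)
    (heig : ∀ i x, ∫ y, ⟪Φ x, Φ y⟫ * ψ i y ∂ρ = lam i * ψ i x)
    (hmercer : ∀ x y, HasSum (fun i => lam i * ψ i x * ψ i y) ⟪Φ x, Φ y⟫)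
    (n : ℕ) (pts : Fin n → X) :
    ∑' i : ℕ, lam (n + i) ≤
      ∫ x, Metric.infDist (Φ x)
          (Submodule.span ℝ (Set.range fun i => Φ (pts i)) : Set H) ^ 2 ∂ρ :=
  integral_sq_dist_span_ge_tail_general ρ Φ hΦc lam hlam_anti ψ hψc horth heig n pts
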